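/- Let d, m, k ∈ ℕ and let p_0, …, p_m, q_0, …, q_k : ℝ^d → ℝ be polynomial functions. For θ ∈ ℝ^d define P_θ(λ) = Σ_{u=0}^m p_u(θ) λ^u and Q_θ(λ) = Σ_{u=0}^k q_u(θ) λ^u. Suppose there exists θ₀ ∈ ℝ^d with p_m(θ₀) ≠ 0, q_k(θ₀) ≠ 0, and such that P_{θ₀} and Q_{θ₀} have no common complex root. Then the set {θ ∈ ℝ^d : p_m(θ) ≠ 0, q_k(θ) ≠ 0, and there exists z ∈ ℂ with P_θ(z) = 0 and Q_θ(z) = 0} has Lebesgue measure zero in ℝ^d. -/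

import Mathlib

open Finset MeasureTheory MvPolynomial

/-!
The resultant `r` of `∑ C (p u) X ^ u` and `∑ C (q u) X ^ u`, taken with the formal degrees `m`
and `k`, is a polynomial in `θ`. At every `θ` where both leading coefficients survive, its value
is the resultant of `P_θ` and `Q_θ`, which vanishes exactly when they have a common complex root.
Since `r(θ₀) ≠ 0`, the exceptional set lies in the zero set of a nonzero polynomial, and such a
set is Lebesgue-null: by Fubini, for almost every value of the other coordinates the polynomial
is a nonzero polynomial in the first coordinate, because its leading coefficient is nonzero
almost everywhere by induction on the dimension.
-/

namespace Polynomial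

lemma natDegree_sum_range_C_mul_X_pow {R : Type*} [Semiring R] (a : ℕ → R) {n : ℕ}
    (ha : a n ≠ 0) : (∑ u ∈ range (n + 1), C (a u) * X ^ u).natDegree = n := by
  refine natDegree_eq_of_le_of_coeff_ne_zero ?_ (by simpa using ha)
  exact natDegree_sum_le_of_forall_le _ _ fun u hu =>
    (natDegree_C_mul_X_pow_le _ _).trans (Nat.lt_succ_iff.mp (mem_range.mp hu))

lemma resultant_eq_zero_iff_exists_common_root {K : Type*} [Field K] [IsAlgClosed K]
    {f g : K[X]} (hf : f ≠ 0) :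
    resultant f g = 0 ↔ ∃ z, f.eval z = 0 ∧ g.eval z = 0 := by
  simp [resultant_eq_zero_iff, hf, isCoprime_iff_aeval_ne_zero_of_isAlgClosed K K]

lemma map_resultant_eq_zero_iff {A K : Type*} [CommRing A] [Field K] [IsAlgClosed K]
    (φ : A →+* K) (a b : ℕ → A) {m k : ℕ} (ha : φ (a m) ≠ 0) (hb : φ (b k) ≠ 0) :
    φ (resultant (∑ u ∈ range (m + 1), C (a u) * X ^ u)
        (∑ u ∈ range (k + 1), C (b u) * X ^ u) m k) = 0 ↔
      ∃ z, (∑ u ∈ range (m + 1), φ (a u) * z ^ u = 0) ∧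
        ∑ u ∈ range (k + 1), φ (b u) * z ^ u = 0 := by
  have hmap (c : ℕ → A) (n : ℕ) :
      (∑ u ∈ range (n + 1), C (c u) * X ^ u).map φ =
        ∑ u ∈ range (n + 1), C (φ (c u)) * X ^ u := by
    simp [Polynomial.map_sum]
  have hfm := natDegree_sum_range_C_mul_X_pow (fun u => φ (a u)) ha
  have hgk := natDegree_sum_range_C_mul_X_pow (fun u => φ (b u)) hb
  have hf : (∑ u ∈ range (m + 1), C (φ (a u)) * X ^ u) ≠ 0 := fun h =>
    ha (by simpa using congrArg (coeff · m) h)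
  have hres := resultant_eq_zero_iff_exists_common_root
    (g := ∑ u ∈ range (k + 1), C (φ (b u)) * X ^ u) hf
  rw [hfm, hgk] at hres
  rw [← resultant_map_map, hmap, hmap, hres]
  simp [eval_finsetSum]

end Polynomial

theorem MvPolynomial.ae_eval_ne_zero {n : ℕ} {f : MvPolynomial (Fin n) ℝ} (hf : f ≠ 0) :
    ∀ᵐ x : Fin n → ℝ, eval x f ≠ 0 := by
  induction n with
  | zero =>
    obtain ⟨c, rfl⟩ := C_surjective (Fin 0) f
    exact .of_forall fun x => by simpa using hf
  | succ n ih =>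
    set g := finSuccEquiv ℝ n f
    have hg : g.leadingCoeff ≠ 0 := by simpa [g] using hf
    set e := MeasurableEquiv.piFinSuccAbove (fun _ : Fin (n + 1) => ℝ) 0
    have he := (volume_preserving_piFinSuccAbove (fun _ : Fin (n + 1) => ℝ) 0).symm
    have hmeas : MeasurableSet {x | eval x f ≠ 0} :=
      (continuous_eval f).measurable (measurableSet_singleton 0).compl
    rw [← he.map_eq, ae_map_iff he.measurable.aemeasurable hmeas, Measure.volume_eq_prod]
    refine (Measure.ae_prod_iff_ae_ae (he.measurable hmeas)).2 <|
      (Measure.ae_ae_comm (p := fun y x => eval (e.symm (y, x)) f ≠ 0)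
        (he.measurable hmeas)).2 ?_
    filter_upwards [ih hg] with x hx
    have hgx : g.map (eval x) ≠ 0 := by
      rwa [← Polynomial.leadingCoeff_ne_zero,
        Polynomial.leadingCoeff_map_of_leadingCoeff_ne_zero _ hx]
    rw [ae_iff]
    refine measure_mono_null (fun y hy => ?_)
      ((Polynomial.finite_setOfPred_isRoot hgx).measure_zero _)
    simpa [e, g, ← eval_eq_eval_mv_eval', Fin.consEquiv] using hy

/-- Let `p 0, …, p m` and `q 0, …, q k` be polynomial functions on
`ℝ^d`, and for `θ ∈ ℝ^d` set `P_θ(λ) = Σ_{u=0}^m p u (θ) λ^u` and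
`Q_θ(λ) = Σ_{u=0}^k q u (θ) λ^u`.  If for some `θ₀` both leading coefficients are
nonzero and `P_{θ₀}`, `Q_{θ₀}` have no common complex root, then the set of `θ` with
nonzero leading coefficients for which `P_θ` and `Q_θ` have a common complex root has
Lebesgue measure zero. -/
theorem stmt5 (d m k : ℕ) (p q : ℕ → MvPolynomial (Fin d) ℝ)
    (θ₀ : Fin d → ℝ) (hp₀ : eval θ₀ (p m) ≠ 0) (hq₀ : eval θ₀ (q k) ≠ 0)
    (hnocommon : ¬ ∃ z : ℂ,
      (∑ u ∈ range (m + 1), (eval θ₀ (p u) : ℂ) * z ^ u = 0) ∧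
      (∑ u ∈ range (k + 1), (eval θ₀ (q u) : ℂ) * z ^ u = 0)) :
    volume {θ : Fin d → ℝ | eval θ (p m) ≠ 0 ∧ eval θ (q k) ≠ 0 ∧
      ∃ z : ℂ, (∑ u ∈ range (m + 1), (eval θ (p u) : ℂ) * z ^ u = 0) ∧
        (∑ u ∈ range (k + 1), (eval θ (q u) : ℂ) * z ^ u = 0)} = 0 := by
  set r := Polynomial.resultant (∑ u ∈ range (m + 1), Polynomial.C (p u) * Polynomial.X ^ u)
    (∑ u ∈ range (k + 1), Polynomial.C (q u) * Polynomial.X ^ u) m k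
  have hr (θ : Fin d → ℝ) (hp : eval θ (p m) ≠ 0) (hq : eval θ (q k) ≠ 0) :
      eval θ r = 0 ↔ ∃ z : ℂ, (∑ u ∈ range (m + 1), (eval θ (p u) : ℂ) * z ^ u = 0) ∧
        (∑ u ∈ range (k + 1), (eval θ (q u) : ℂ) * z ^ u = 0) := by
    simpa using Polynomial.map_resultant_eq_zero_iff (Complex.ofRealHom.comp (eval θ)) p q
      (by simpa using hp) (by simpa using hq)
  have hr₀ : r ≠ 0 := fun h => hnocommon ((hr θ₀ hp₀ hq₀).1 (by simp [h]))
  exact measure_mono_null (fun θ ⟨hp, hq, hz⟩ => not_not.2 ((hr θ hp hq).2 hz))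
    (ae_iff.1 (ae_eval_ne_zero hr₀))
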